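/- The Apéry set of S is β-rectangular if and only if Ap(S) has a unique maximal element with respect to the order ⪯_M and this element has a unique maximal representation. -/

import Mathlib

open Finset

/-- `S` is a numerical semigroup: a submonoid of `(ℕ, +)` with finite complement. -/
def IsNumSgp (S : Set ℕ) : Prop :=
  0 ∈ S ∧ (∀ a ∈ S, ∀ b ∈ S, a + b ∈ S) ∧ (Sᶜ : Set ℕ).Finite

/-- `s` belongs to the Apéry set of `S` with respect to `m`:
`s ∈ S` and `s - m ∉ S` (i.e. no `u ∈ S` with `u + m = s`). -/
def InApery (S : Set ℕ) (m s : ℕ) : Prop :=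
  s ∈ S ∧ ∀ u ∈ S, u + m ≠ s

def AperySet (S : Set ℕ) (m : ℕ) : Set ℕ := {s | InApery S m s}

/-- `ordS S s` is the largest `h` such that `s` is a sum of `h` nonzero elements of `S`. -/
noncomputable def ordS (S : Set ℕ) (s : ℕ) : ℕ :=
  sSup {h : ℕ | ∃ f : Fin h → ℕ, (∀ j, f j ∈ S ∧ f j ≠ 0) ∧ ∑ j, f j = s}

/-- `g` generates `S`. -/
def Generates (S : Set ℕ) {ν : ℕ} (g : Fin ν → ℕ) : Prop :=
  ∀ s, s ∈ S ↔ ∃ lam : Fin ν → ℕ, ∑ i, lam i * g i = s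

/-- `g` is a minimal generating system of `S`: it generates `S`
and no `g i` is generated by the remaining generators. -/
def MinimalGen (S : Set ℕ) {ν : ℕ} (g : Fin ν → ℕ) : Prop :=
  Generates S g ∧ ∀ i, ¬ ∃ lam : Fin ν → ℕ, lam i = 0 ∧ ∑ j, lam j * g j = g i

/-- `lam` is a maximal representation of `s`: the coefficient sum equals `ordS S s`. -/
def IsMaxRep (S : Set ℕ) {ν : ℕ} (g : Fin ν → ℕ) (lam : Fin ν → ℕ) (s : ℕ) : Prop :=
  ∑ i, lam i * g i = s ∧ ∑ i, lam i = ordS S s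

/-- `s` has a unique maximal representation. -/
def UniqueMaxRep (S : Set ℕ) {ν : ℕ} (g : Fin ν → ℕ) (s : ℕ) : Prop :=
  ∃! lam : Fin ν → ℕ, IsMaxRep S g lam s

/-- `β_i = max {h | h g_i ∈ Ap(S) and ord(h g_i) = h}`. -/
noncomputable def betaN (S : Set ℕ) (m : ℕ) {ν : ℕ} (g : Fin ν → ℕ) (i : Fin ν) : ℕ :=
  sSup {h : ℕ | InApery S m (h * g i) ∧ ordS S (h * g i) = h}

/-- `γ_i = max {h | h g_i ∈ Ap(S), ord(h g_i) = h and h g_i has a unique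
maximal representation}`. -/
noncomputable def gammaN (S : Set ℕ) (m : ℕ) {ν : ℕ} (g : Fin ν → ℕ) (i : Fin ν) : ℕ :=
  sSup {h : ℕ | InApery S m (h * g i) ∧ ordS S (h * g i) = h ∧ UniqueMaxRep S g (h * g i)}

/-- `B = {Σ_{i≥2} λ_i g_i : 0 ≤ λ_i ≤ β_i}`. -/
def Bset (S : Set ℕ) (m : ℕ) {ν : ℕ} [NeZero ν] (g : Fin ν → ℕ) : Set ℕ :=
  {s | ∃ lam : Fin ν → ℕ, lam 0 = 0 ∧ (∀ i, lam i ≤ betaN S m g i) ∧ ∑ i, lam i * g i = s}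

/-- `Γ = {Σ_{i≥2} λ_i g_i : 0 ≤ λ_i ≤ γ_i}`. -/
def GammaSet (S : Set ℕ) (m : ℕ) {ν : ℕ} [NeZero ν] (g : Fin ν → ℕ) : Set ℕ :=
  {s | ∃ lam : Fin ν → ℕ, lam 0 = 0 ∧ (∀ i, lam i ≤ gammaN S m g i) ∧ ∑ i, lam i * g i = s}

/-- `s ⪯_M t`. -/
def predM (S : Set ℕ) (s t : ℕ) : Prop :=
  ∃ u ∈ S, s + u = t ∧ ordS S s + ordS S u = ordS S t

/-!
A maximal representation `λ` of an element of `Ap(S)` has `λ₁ = 0`, and each `λᵢ gᵢ` is again an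
Apéry element of order `λᵢ`, so `λᵢ ≤ βᵢ`. Hence `Ap(S) ⊆ B` always, and `ord ≤ Σ βᵢ` on `Ap(S)`.

If `Ap(S) = B`, then `w = Σ βᵢ gᵢ ∈ Ap(S)` has order `Σ βᵢ`: nothing in `Ap(S)` lies strictly
`⪯_M`-above it, every element of `Ap(S)` lies `⪯_M`-below it, and its only maximal representation
is `β`. Conversely, if `w` is the unique `⪯_M`-maximal element, each `βᵢ gᵢ` lies `⪯_M`-below `w`,
and gluing maximal representations along `⪯_M` shows that the unique maximal representation `λ`
of `w` dominates `β`; every element of `B` is then a summand of `w`, hence in `Ap(S)`.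
-/

section

variable {S : Set ℕ} {ν : ℕ} {g : Fin ν → ℕ}

def ordSet (S : Set ℕ) (s : ℕ) : Set ℕ :=
  {h : ℕ | ∃ f : Fin h → ℕ, (∀ j, f j ∈ S ∧ f j ≠ 0) ∧ ∑ j, f j = s}

lemma le_of_mem_ordSet {s h : ℕ} (hh : h ∈ ordSet S s) : h ≤ s := by
  obtain ⟨f, hf, rfl⟩ := hh
  simpa using Finset.card_nsmul_le_sum univ f 1 fun j _ => Nat.one_le_iff_ne_zero.2 (hf j).2

lemma bddAbove_ordSet (S : Set ℕ) (s : ℕ) : BddAbove (ordSet S s) :=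
  ⟨s, fun _ => le_of_mem_ordSet⟩

lemma zero_mem_ordSet (S : Set ℕ) : 0 ∈ ordSet S 0 :=
  ⟨Fin.elim0, fun j => j.elim0, by simp⟩

lemma mul_mem_ordSet {x : ℕ} (hx : x ∈ S) (hx0 : x ≠ 0) (k : ℕ) : k ∈ ordSet S (k * x) :=
  ⟨fun _ => x, fun _ => ⟨hx, hx0⟩, by simp⟩

lemma add_mem_ordSet {a b h₁ h₂ : ℕ} (ha : h₁ ∈ ordSet S a) (hb : h₂ ∈ ordSet S b) :
    h₁ + h₂ ∈ ordSet S (a + b) := by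
  obtain ⟨f₁, hf₁, rfl⟩ := ha
  obtain ⟨f₂, hf₂, rfl⟩ := hb
  exact ⟨Fin.append f₁ f₂, Fin.addCases (by simpa using hf₁) (by simpa using hf₂),
    by simp [Fin.sum_univ_add]⟩

lemma sum_mem_ordSet (hg : ∀ i, g i ∈ S) (hg0 : ∀ i, g i ≠ 0) (lam : Fin ν → ℕ) :
    ∑ i, lam i ∈ ordSet S (∑ i, lam i * g i) := by
  induction (univ : Finset (Fin ν)) using Finset.induction_on with
  | empty => simpa using zero_mem_ordSet S
  | insert i s hi ih =>
    rw [sum_insert hi, sum_insert hi]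
    exact add_mem_ordSet (mul_mem_ordSet (hg i) (hg0 i) _) ih

lemma ordS_mem_ordSet {s : ℕ} (hs : s ∈ S) : ordS S s ∈ ordSet S s := by
  refine Nat.sSup_mem ?_ (bddAbove_ordSet S s)
  rcases eq_or_ne s 0 with rfl | h0
  · exact ⟨0, zero_mem_ordSet S⟩
  · exact ⟨1, by simpa using mul_mem_ordSet hs h0 1⟩

lemma le_ordS {s h : ℕ} (hh : h ∈ ordSet S s) : h ≤ ordS S s :=
  le_csSup (bddAbove_ordSet S s) hh

lemma ordS_zero (S : Set ℕ) : ordS S 0 = 0 :=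
  Nat.le_zero.1 <| csSup_le' fun _ => le_of_mem_ordSet

lemma ordS_pos {s : ℕ} (hs : s ∈ S) (h0 : s ≠ 0) : 0 < ordS S s :=
  le_ordS (by simpa using mul_mem_ordSet hs h0 1)

lemma ordS_add_le {a b : ℕ} (ha : a ∈ S) (hb : b ∈ S) :
    ordS S a + ordS S b ≤ ordS S (a + b) :=
  le_ordS (add_mem_ordSet (ordS_mem_ordSet ha) (ordS_mem_ordSet hb))

lemma sum_le_ordS (hg : ∀ i, g i ∈ S) (hg0 : ∀ i, g i ≠ 0) (lam : Fin ν → ℕ) :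
    ∑ i, lam i ≤ ordS S (∑ i, lam i * g i) :=
  le_ordS (sum_mem_ordSet hg hg0 lam)

lemma sum_mul_add (g lam mu : Fin ν → ℕ) :
    ∑ i, (lam + mu) i * g i = ∑ i, lam i * g i + ∑ i, mu i * g i := by
  simp only [Pi.add_apply, add_mul, sum_add_distrib]

lemma sum_single_mul (g : Fin ν → ℕ) (i : Fin ν) (c : ℕ) :
    ∑ j, (Pi.single i c : Fin ν → ℕ) j * g j = c * g i := by
  simp [Pi.single_apply, ite_mul]

lemma sum_mul_add_tsub {lam mu : Fin ν → ℕ} (hle : mu ≤ lam) :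
    ∑ i, mu i * g i + ∑ i, (lam - mu) i * g i = ∑ i, lam i * g i := by
  rw [← sum_mul_add, add_tsub_cancel_of_le hle]

lemma sum_add_sum_tsub {lam mu : Fin ν → ℕ} (hle : mu ≤ lam) :
    ∑ i, mu i + ∑ i, (lam - mu) i = ∑ i, lam i := by
  rw [← sum_add_distrib]
  exact sum_congr rfl fun i _ => add_tsub_cancel_of_le (hle i)

lemma single_le_of_le {lam : Fin ν → ℕ} {i : Fin ν} {c : ℕ} (h : c ≤ lam i) :
    Pi.single i c ≤ lam := by
  intro j
  rcases eq_or_ne j i with rfl | hj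
  · simpa using h
  · simp [hj]

namespace Generates

lemma sum_mem (hgen : Generates S g) (lam : Fin ν → ℕ) : ∑ i, lam i * g i ∈ S :=
  (hgen _).2 ⟨lam, rfl⟩

lemma mem (hgen : Generates S g) (i : Fin ν) : g i ∈ S := by
  simpa [sum_single_mul] using hgen.sum_mem (Pi.single i 1)

lemma zero_mem (hgen : Generates S g) : 0 ∈ S := by
  simpa using hgen.sum_mem 0

lemma add_mem (hgen : Generates S g) : ∀ a ∈ S, ∀ b ∈ S, a + b ∈ S := by
  intro a ha b hb
  obtain ⟨lam, rfl⟩ := (hgen a).1 ha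
  obtain ⟨mu, rfl⟩ := (hgen b).1 hb
  simpa only [sum_mul_add] using hgen.sum_mem (lam + mu)

end Generates

lemma MinimalGen.ne_zero (hmin : MinimalGen S g) (i : Fin ν) : g i ≠ 0 :=
  fun h => hmin.2 i ⟨0, rfl, by simp [h]⟩

/-- Refine each of the `h` nonzero pieces into generators: each piece needs at least one. -/
lemma exists_sum_ge_of_mem_ordSet (hgen : Generates S g) {s h : ℕ} (hh : h ∈ ordSet S s) :
    ∃ lam : Fin ν → ℕ, ∑ i, lam i * g i = s ∧ h ≤ ∑ i, lam i := by
  obtain ⟨f, hf, rfl⟩ := hh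
  choose mu hmu using fun j => (hgen (f j)).1 (hf j).1
  refine ⟨∑ j, mu j, ?_, ?_⟩
  · simp only [Finset.sum_apply, sum_mul]
    rw [sum_comm]
    exact sum_congr rfl fun j _ => hmu j
  · have hpos : ∀ j, 1 ≤ ∑ i, mu j i := fun j => Nat.one_le_iff_ne_zero.2 fun h0 =>
      (hf j).2 (by simp [← hmu j, sum_eq_zero_iff.1 h0])
    simpa [Finset.sum_apply, sum_comm (f := fun i j => mu j i)] using
      Finset.card_nsmul_le_sum univ (fun j => ∑ i, mu j i) 1 fun j _ => hpos j

lemma exists_isMaxRep (hgen : Generates S g) (hg0 : ∀ i, g i ≠ 0) {s : ℕ} (hs : s ∈ S) :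
    ∃ lam, IsMaxRep S g lam s := by
  obtain ⟨lam, rfl, hle⟩ := exists_sum_ge_of_mem_ordSet hgen (ordS_mem_ordSet hs)
  exact ⟨lam, rfl, le_antisymm (sum_le_ordS hgen.mem hg0 lam) hle⟩

lemma IsMaxRep.of_le (hgen : Generates S g) (hg0 : ∀ i, g i ≠ 0) {lam mu : Fin ν → ℕ} {t : ℕ}
    (hlam : IsMaxRep S g lam t) (hle : mu ≤ lam) : IsMaxRep S g mu (∑ i, mu i * g i) := by
  refine ⟨rfl, le_antisymm (sum_le_ordS hgen.mem hg0 mu) ?_⟩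
  have hsplit := ordS_add_le (hgen.sum_mem mu) (hgen.sum_mem (lam - mu))
  rw [sum_mul_add_tsub hle, hlam.1, ← hlam.2, ← sum_add_sum_tsub hle] at hsplit
  have hrest := sum_le_ordS hgen.mem hg0 (lam - mu)
  omega

lemma IsMaxRep.predM (hgen : Generates S g) (hg0 : ∀ i, g i ≠ 0) {lam mu : Fin ν → ℕ} {t : ℕ}
    (hlam : IsMaxRep S g lam t) (hle : mu ≤ lam) : predM S (∑ i, mu i * g i) t := by
  have hmu := hlam.of_le hgen hg0 hle
  have hrest := hlam.of_le hgen hg0 (tsub_le_self : lam - mu ≤ lam)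
  refine ⟨_, hgen.sum_mem (lam - mu), by rw [sum_mul_add_tsub hle, hlam.1], ?_⟩
  rw [← hmu.2, ← hrest.2, ← hlam.2, sum_add_sum_tsub hle]

lemma IsMaxRep.add {lam mu : Fin ν → ℕ} {s u t : ℕ} (hlam : IsMaxRep S g lam s)
    (hmu : IsMaxRep S g mu u) (hsum : s + u = t) (hord : ordS S s + ordS S u = ordS S t) :
    IsMaxRep S g (lam + mu) t :=
  ⟨by rw [sum_mul_add, hlam.1, hmu.1, hsum], by
    rw [← hord, ← hlam.2, ← hmu.2, ← sum_add_distrib]; rfl⟩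

lemma InApery.of_add {m a b : ℕ} (hadd : ∀ a ∈ S, ∀ b ∈ S, a + b ∈ S) (ht : InApery S m (a + b))
    (ha : a ∈ S) (hb : b ∈ S) : InApery S m a :=
  ⟨ha, fun u hu hum => ht.2 (u + b) (hadd u hu b hb) (by omega)⟩

lemma InApery.of_le {m : ℕ} (hgen : Generates S g) {lam mu : Fin ν → ℕ}
    (ht : InApery S m (∑ i, lam i * g i)) (hle : mu ≤ lam) : InApery S m (∑ i, mu i * g i) := by
  rw [← sum_mul_add_tsub hle] at ht
  exact ht.of_add hgen.add_mem (hgen.sum_mem mu) (hgen.sum_mem _)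

lemma InApery.coeff_zero [NeZero ν] (hgen : Generates S g) {lam : Fin ν → ℕ}
    (ht : InApery S (g 0) (∑ i, lam i * g i)) : lam 0 = 0 := by
  by_contra h0
  have hle : Pi.single 0 1 ≤ lam := single_le_of_le (Nat.one_le_iff_ne_zero.2 h0)
  refine ht.2 _ (hgen.sum_mem (lam - Pi.single 0 1)) ?_
  rw [← sum_mul_add_tsub hle, sum_single_mul, one_mul, add_comm]

lemma bddAbove_aperySet (m : ℕ) (hfin : (Sᶜ : Set ℕ).Finite) :
    BddAbove (AperySet S m) := by
  obtain ⟨F, hF⟩ := hfin.bddAbove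
  refine ⟨F + m, fun s hs => ?_⟩
  by_contra! hgt
  exact hs.2 (s - m) (by_contra fun hsm => by have := hF hsm; omega) (by omega)

def betaSet (S : Set ℕ) (m : ℕ) (g : Fin ν → ℕ) (i : Fin ν) : Set ℕ :=
  {h : ℕ | InApery S m (h * g i) ∧ ordS S (h * g i) = h}

lemma bddAbove_betaSet {m : ℕ} (hAp : BddAbove (AperySet S m)) {i : Fin ν} (hgi : g i ≠ 0) :
    BddAbove (betaSet S m g i) := by
  obtain ⟨N, hN⟩ := hAp
  exact ⟨N, fun h hh => (Nat.le_mul_of_pos_right h (Nat.pos_of_ne_zero hgi)).trans (hN hh.1)⟩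

lemma betaN_mem_betaSet {m : ℕ} (h0 : 0 ∈ S) (hm : 0 < m) (hAp : BddAbove (AperySet S m))
    {i : Fin ν} (hgi : g i ≠ 0) : betaN S m g i ∈ betaSet S m g i :=
  Nat.sSup_mem ⟨0, ⟨by simpa using h0, fun _ _ => by omega⟩, by simpa using ordS_zero S⟩
    (bddAbove_betaSet hAp hgi)

lemma le_betaN_of_mem {m h : ℕ} (hAp : BddAbove (AperySet S m)) {i : Fin ν} (hgi : g i ≠ 0)
    (hh : h ∈ betaSet S m g i) : h ≤ betaN S m g i :=
  le_csSup (bddAbove_betaSet hAp hgi) hh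

lemma betaN_zero [NeZero ν] (hgen : Generates S g) : betaN S (g 0) g 0 = 0 :=
  Nat.le_zero.1 <| csSup_le' fun h hh => Nat.le_zero.2 <| by
    simpa using InApery.coeff_zero hgen (lam := Pi.single 0 h) ((sum_single_mul g 0 h).symm ▸ hh.1)

lemma IsMaxRep.le_betaN [NeZero ν] (hgen : Generates S g) (hg0 : ∀ i, g i ≠ 0)
    (hAp : BddAbove (AperySet S (g 0))) {lam : Fin ν → ℕ} {t : ℕ}
    (ht : InApery S (g 0) t) (hlam : IsMaxRep S g lam t) (i : Fin ν) :
    lam i ≤ betaN S (g 0) g i := by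
  have hle : Pi.single i (lam i) ≤ lam := single_le_of_le le_rfl
  have hord := (hlam.of_le hgen hg0 hle).2
  have hAp' := InApery.of_le hgen (hlam.1 ▸ ht) hle
  rw [sum_single_mul] at hord hAp'
  exact le_betaN_of_mem hAp (hg0 i) ⟨hAp', by simpa using hord.symm⟩

lemma aperySet_subset_bset [NeZero ν] (hgen : Generates S g) (hg0 : ∀ i, g i ≠ 0)
    (hAp : BddAbove (AperySet S (g 0))) : AperySet S (g 0) ⊆ Bset S (g 0) g := by
  intro s hs
  obtain ⟨lam, hlam⟩ := exists_isMaxRep hgen hg0 hs.1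
  exact ⟨lam, InApery.coeff_zero hgen (hlam.1 ▸ hs), hlam.le_betaN hgen hg0 hAp hs, hlam.1⟩

lemma ordS_le_sum_betaN [NeZero ν] (hgen : Generates S g) (hg0 : ∀ i, g i ≠ 0)
    (hAp : BddAbove (AperySet S (g 0))) {t : ℕ} (ht : InApery S (g 0) t) :
    ordS S t ≤ ∑ i, betaN S (g 0) g i := by
  obtain ⟨lam, hlam⟩ := exists_isMaxRep hgen hg0 ht.1
  exact hlam.2 ▸ sum_le_sum fun i _ => hlam.le_betaN hgen hg0 hAp ht i

lemma predM_refl (h0 : 0 ∈ S) (t : ℕ) : predM S t t :=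
  ⟨0, h0, add_zero t, by rw [ordS_zero, add_zero]⟩

lemma predM.le {s t : ℕ} (h : predM S s t) : s ≤ t := by
  obtain ⟨u, -, rfl, -⟩ := h
  exact Nat.le_add_right s u

lemma predM.trans (hadd : ∀ a ∈ S, ∀ b ∈ S, a + b ∈ S) {s t r : ℕ} (hs : s ∈ S)
    (hst : predM S s t) (htr : predM S t r) : predM S s r := by
  obtain ⟨u, hu, rfl, hu_ord⟩ := hst
  obtain ⟨v, hv, rfl, hv_ord⟩ := htr
  refine ⟨u + v, hadd u hu v hv, (add_assoc s u v).symm, le_antisymm ?_ ?_⟩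
  · rw [add_assoc]
    exact ordS_add_le hs (hadd u hu v hv)
  · have := ordS_add_le hu hv
    omega

/-- The largest element of `Ap(S)` above `t` is `⪯_M`-maximal, since `⪯_M` refines `≤`. -/
lemma exists_predM_maximal {m t : ℕ} (h0 : 0 ∈ S) (hadd : ∀ a ∈ S, ∀ b ∈ S, a + b ∈ S)
    (hAp : BddAbove (AperySet S m)) (ht : InApery S m t) :
    ∃ w, InApery S m w ∧ predM S t w ∧ ∀ r, InApery S m r → predM S w r → r = w := by
  set A := {r | InApery S m r ∧ predM S t r}
  have hbdd : BddAbove A := hAp.mono fun _ hr => hr.1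
  obtain ⟨hw, htw⟩ := Nat.sSup_mem (⟨t, ht, predM_refl h0 t⟩ : A.Nonempty) hbdd
  exact ⟨_, hw, htw, fun r hr hwr =>
    le_antisymm (le_csSup hbdd ⟨hr, htw.trans hadd ht.1 hwr⟩) hwr.le⟩

theorem exists_unique_predM_max_of_aperySet_eq_bset [NeZero ν] (hgen : Generates S g)
    (hg0 : ∀ i, g i ≠ 0) (hAp : BddAbove (AperySet S (g 0)))
    (hrect : AperySet S (g 0) = Bset S (g 0) g) :
    ∃ w : ℕ, InApery S (g 0) w ∧
      (∀ t, InApery S (g 0) t → predM S w t → t = w) ∧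
      (∀ w', InApery S (g 0) w' → (∀ t, InApery S (g 0) t → predM S w' t → t = w') → w' = w) ∧
      UniqueMaxRep S g w := by
  set β := betaN S (g 0) g
  have hw : InApery S (g 0) (∑ i, β i * g i) :=
    show _ ∈ AperySet S (g 0) from hrect ▸ ⟨β, betaN_zero hgen, fun _ => le_rfl, rfl⟩
  have hβ : IsMaxRep S g β (∑ i, β i * g i) :=
    ⟨rfl, le_antisymm (sum_le_ordS hgen.mem hg0 β) (ordS_le_sum_betaN hgen hg0 hAp hw)⟩
  refine ⟨_, hw, ?_, ?_, β, hβ, fun μ hμ => ?_⟩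
  · rintro t ht ⟨u, hu, rfl, hord⟩
    by_contra hu0
    have hu_pos := ordS_pos hu (by simpa using hu0)
    have ht_ord : ordS S _ ≤ ∑ i, β i := ordS_le_sum_betaN hgen hg0 hAp ht
    have hw_ord := hβ.2
    omega
  · intro w' hw' hw'max
    obtain ⟨lam, hlam⟩ := exists_isMaxRep hgen hg0 hw'.1
    have hpred := hβ.predM hgen hg0 (hlam.le_betaN hgen hg0 hAp hw')
    rw [hlam.1] at hpred
    exact (hw'max _ hw hpred).symm
  · have hμβ : ∀ i ∈ univ, μ i ≤ β i := fun i _ => hμ.le_betaN hgen hg0 hAp hw i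
    exact funext fun i => (sum_eq_sum_iff_of_le hμβ).1 (hμ.2.trans hβ.2.symm) i (mem_univ i)

theorem aperySet_eq_bset_of_unique_predM_max [NeZero ν] (hgen : Generates S g)
    (hg0 : ∀ i, g i ≠ 0) (hAp : BddAbove (AperySet S (g 0))) {w : ℕ} (hw : InApery S (g 0) w)
    (huniq : ∀ w', InApery S (g 0) w' →
      (∀ t, InApery S (g 0) t → predM S w' t → t = w') → w' = w)
    (hrep : UniqueMaxRep S g w) :
    AperySet S (g 0) = Bset S (g 0) g := by
  obtain ⟨lam, hlam, hlam_uniq⟩ := hrep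
  have hβ : ∀ i, betaN S (g 0) g i ≤ lam i := by
    intro i
    obtain ⟨hβAp, hβord⟩ :=
      betaN_mem_betaSet hgen.zero_mem (Nat.pos_of_ne_zero (hg0 0)) hAp (hg0 i)
    obtain ⟨w', hw', ⟨u, hu, hsum, hord⟩, hw'max⟩ :=
      exists_predM_maximal hgen.zero_mem hgen.add_mem hAp hβAp
    obtain rfl := huniq w' hw' hw'max
    obtain ⟨mu, hmu⟩ := exists_isMaxRep hgen hg0 hu
    have hsingle : IsMaxRep S g (Pi.single i (betaN S (g 0) g i)) (betaN S (g 0) g i * g i) :=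
      ⟨sum_single_mul g i _, by simpa using hβord.symm⟩
    have hlam_eq := hlam_uniq _ (hsingle.add hmu hsum hord)
    rw [← hlam_eq]
    simp
  refine (aperySet_subset_bset hgen hg0 hAp).antisymm ?_
  rintro s ⟨μ, -, hμβ, rfl⟩
  exact InApery.of_le hgen (hlam.1 ▸ hw) fun i => (hμβ i).trans (hβ i)

end

theorem betaRect_iff_unique_maxM_general (S : Set ℕ) {ν : ℕ} [NeZero ν] (g : Fin ν → ℕ)
    (hS : IsNumSgp S) (hgen : MinimalGen S g) :
    AperySet S (g 0) = Bset S (g 0) g ↔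
      ∃ w : ℕ, InApery S (g 0) w ∧
        (∀ t, InApery S (g 0) t → predM S w t → t = w) ∧
        (∀ w', InApery S (g 0) w' → (∀ t, InApery S (g 0) t → predM S w' t → t = w') → w' = w) ∧
        UniqueMaxRep S g w := by
  have hAp := bddAbove_aperySet (S := S) (g 0) hS.2.2
  refine ⟨exists_unique_predM_max_of_aperySet_eq_bset hgen.1 hgen.ne_zero hAp, ?_⟩
  rintro ⟨w, hw, -, huniq, hrep⟩
  exact aperySet_eq_bset_of_unique_predM_max hgen.1 hgen.ne_zero hAp hw huniq hrep

theorem betaRect_iff_unique_maxM (S : Set ℕ) {ν : ℕ} [NeZero ν] (g : Fin ν → ℕ) (hν : 2 ≤ ν)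
    (hS : IsNumSgp S) (hgen : MinimalGen S g) (hmono : StrictMono g)
    (hmpos : 0 < g 0) (hmul : ∀ s ∈ S, s ≠ 0 → g 0 ≤ s) :
    AperySet S (g 0) = Bset S (g 0) g ↔
      ∃ w : ℕ, InApery S (g 0) w ∧
        (∀ t, InApery S (g 0) t → predM S w t → t = w) ∧
        (∀ w', InApery S (g 0) w' → (∀ t, InApery S (g 0) t → predM S w' t → t = w') → w' = w) ∧
        UniqueMaxRep S g w :=
  betaRect_iff_unique_maxM_general S g hS hgen
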